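/- Let o ∈ I be a node such that no edge of E has both endpoints equal to o, and suppose V_o = ⊕_{j∈J} W_j is a direct sum decomposition indexed by a finite set J, with inclusions ι_j : W_j → V_o and projections π_j : V_o → W_j. Let Q′ be the splayed quiver: its node set is I′ = (I ∖ {o}) ⊔ J, with vector space W_j at node j ∈ J and V_i at i ∈ I ∖ {o}; each edge of E incident to o is replaced by one copy for each element of J, connected in the same way. Given a representation φ of the doubled quiver of Q, define a representation φ′ of the doubled quiver of Q′ by composing each map into o with the projections π_j and each map out of o with the inclusions ι_j (and keeping all other maps). Then μ′_j(φ′) = π_j ∘ μ_o(φ) ∘ ι_j for every j ∈ J, and μ′_i(φ′) = μ_i(φ) for every i ∈ I ∖ {o}. -/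

import Mathlib

/-! STATEMENT 8: splaying (blowing up) a node.

The quiver `Q` has node set `I₀ ⊕ Unit`, with `o = Sum.inr ()` the node to be splayed.
Since no edge has both endpoints equal to `o`, the edge set decomposes as
`E = E₀ ⊕ E₁ ⊕ E₂`, where edges in `E₀` do not touch `o` (head `h₀`, tail `t₀` in `I₀`),
edges in `E₁` have head `o` and tail `t₁` in `I₀`, and edges in `E₂` have tail `o` and
head `h₂` in `I₀`.  The vector space at `o` is the direct sum `V_o = ⊕_{j ∈ J} W j`
(`= Π j, W j`, `J` finite), with canonical inclusions `ι_j = LinearMap.single ℂ W j` and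
projections `π_j = LinearMap.proj j`; node `i ∈ I₀` carries `V₀ i`.

The splayed quiver `Q'` has node set `I₀ ⊕ J` and edge set `E₀ ⊕ (E₁ × J) ⊕ (E₂ × J)`
(each edge incident to `o` is replaced by one copy for each `j ∈ J`, connected in the same
way).  Given a representation `φ = (φp, φm)` of the doubled quiver of `Q`, the
representation `φ' = (splφp, splφm)` of the doubled quiver of `Q'` is obtained by
composing each map into `o` with the projections `π_j` and each map out of `o` with the
inclusions `ι_j`, keeping all other maps.  Then `μ'_j(φ') = π_j ∘ μ_o(φ) ∘ ι_j` for every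
`j ∈ J` and `μ'_i(φ') = μ_i(φ)` for every `i ∈ I₀`. -/

universe u

/-- The `i`-th moment map component
`μ_i(φ) = Σ_{e : hd e = i} φ_e ∘ φ_{e*} − Σ_{e : tl e = i} φ_{e*} ∘ φ_e ∈ End(V i)`. -/
def muQ {I E : Type*} [Fintype E] [DecidableEq I] (hd tl : E → I)
    (V : I → Type*) [∀ i, AddCommGroup (V i)] [∀ i, Module ℂ (V i)]
    (φp : ∀ e, V (tl e) →ₗ[ℂ] V (hd e)) (φm : ∀ e, V (hd e) →ₗ[ℂ] V (tl e))
    (i : I) : V i →ₗ[ℂ] V i :=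
  (∑ e : E, if he : hd e = i then he ▸ ((φp e).comp (φm e)) else 0) -
    ∑ e : E, if te : tl e = i then te ▸ ((φm e).comp (φp e)) else 0

/-- Vector spaces on the nodes of `Q`: `V₀ i` at `i ∈ I₀` and `Π j, W j` at `o`. -/
abbrev splV {I₀ J : Type} (V₀ : I₀ → Type u) (W : J → Type u) : I₀ ⊕ Unit → Type u
  | .inl i => V₀ i
  | .inr _ => ∀ j : J, W j

/-- Vector spaces on the nodes of `Q'`: `V₀ i` at `i ∈ I₀` and `W j` at `j ∈ J`. -/
abbrev splV' {I₀ J : Type} (V₀ : I₀ → Type u) (W : J → Type u) : I₀ ⊕ J → Type u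
  | .inl i => V₀ i
  | .inr j => W j

/-- Head map of `Q`. -/
abbrev splHd {I₀ E₀ E₁ E₂ : Type} (h₀ : E₀ → I₀) (h₂ : E₂ → I₀) :
    E₀ ⊕ E₁ ⊕ E₂ → I₀ ⊕ Unit
  | .inl e => .inl (h₀ e)
  | .inr (.inl _) => .inr ()
  | .inr (.inr e) => .inl (h₂ e)

/-- Tail map of `Q`. -/
abbrev splTl {I₀ E₀ E₁ E₂ : Type} (t₀ : E₀ → I₀) (t₁ : E₁ → I₀) :
    E₀ ⊕ E₁ ⊕ E₂ → I₀ ⊕ Unit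
  | .inl e => .inl (t₀ e)
  | .inr (.inl e) => .inl (t₁ e)
  | .inr (.inr _) => .inr ()

/-- Head map of the splayed quiver `Q'`. -/
abbrev splHd' {I₀ E₀ E₁ E₂ J : Type} (h₀ : E₀ → I₀) (h₂ : E₂ → I₀) :
    E₀ ⊕ (E₁ × J) ⊕ (E₂ × J) → I₀ ⊕ J
  | .inl e => .inl (h₀ e)
  | .inr (.inl p) => .inr p.2
  | .inr (.inr p) => .inl (h₂ p.1)

/-- Tail map of the splayed quiver `Q'`. -/
abbrev splTl' {I₀ E₀ E₁ E₂ J : Type} (t₀ : E₀ → I₀) (t₁ : E₁ → I₀) :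
    E₀ ⊕ (E₁ × J) ⊕ (E₂ × J) → I₀ ⊕ J
  | .inl e => .inl (t₀ e)
  | .inr (.inl p) => .inl (t₁ p.1)
  | .inr (.inr p) => .inr p.2

instance instSplVACG {I₀ J : Type} (V₀ : I₀ → Type u) (W : J → Type u)
    [∀ i, AddCommGroup (V₀ i)] [∀ j, AddCommGroup (W j)] :
    ∀ x, AddCommGroup (splV V₀ W x)
  | .inl i => inferInstanceAs (AddCommGroup (V₀ i))
  | .inr _ => inferInstanceAs (AddCommGroup (∀ j, W j))

instance instSplVMod {I₀ J : Type} (V₀ : I₀ → Type u) (W : J → Type u)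
    [∀ i, AddCommGroup (V₀ i)] [∀ i, Module ℂ (V₀ i)]
    [∀ j, AddCommGroup (W j)] [∀ j, Module ℂ (W j)] :
    ∀ x, Module ℂ (splV V₀ W x)
  | .inl i => inferInstanceAs (Module ℂ (V₀ i))
  | .inr _ => inferInstanceAs (Module ℂ (∀ j, W j))

instance instSplV'ACG {I₀ J : Type} (V₀ : I₀ → Type u) (W : J → Type u)
    [∀ i, AddCommGroup (V₀ i)] [∀ j, AddCommGroup (W j)] :
    ∀ x, AddCommGroup (splV' V₀ W x)
  | .inl i => inferInstanceAs (AddCommGroup (V₀ i))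
  | .inr j => inferInstanceAs (AddCommGroup (W j))

instance instSplV'Mod {I₀ J : Type} (V₀ : I₀ → Type u) (W : J → Type u)
    [∀ i, AddCommGroup (V₀ i)] [∀ i, Module ℂ (V₀ i)]
    [∀ j, AddCommGroup (W j)] [∀ j, Module ℂ (W j)] :
    ∀ x, Module ℂ (splV' V₀ W x)
  | .inl i => inferInstanceAs (Module ℂ (V₀ i))
  | .inr j => inferInstanceAs (Module ℂ (W j))

section Splay

variable {I₀ E₀ E₁ E₂ J : Type} (V₀ : I₀ → Type u) (W : J → Type u)
  [∀ i, AddCommGroup (V₀ i)] [∀ i, Module ℂ (V₀ i)]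
  [∀ j, AddCommGroup (W j)] [∀ j, Module ℂ (W j)] [DecidableEq J]
  (h₀ t₀ : E₀ → I₀) (t₁ : E₁ → I₀) (h₂ : E₂ → I₀)
  (φp : ∀ e, splV V₀ W (splTl t₀ t₁ e) →ₗ[ℂ] splV V₀ W (splHd h₀ h₂ e))
  (φm : ∀ e, splV V₀ W (splHd h₀ h₂ e) →ₗ[ℂ] splV V₀ W (splTl t₀ t₁ e))

/-- The splayed representation: each map into `o` is composed with the projections `π_j`
and each map out of `o` with the inclusions `ι_j`; all other maps are kept. -/
def splφp : ∀ e', splV' V₀ W (splTl' t₀ t₁ e') →ₗ[ℂ] splV' V₀ W (splHd' h₀ h₂ e')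
  | .inl e => φp (.inl e)
  | .inr (.inl p) => (LinearMap.proj p.2).comp (φp (.inr (.inl p.1)))
  | .inr (.inr p) => (φp (.inr (.inr p.1))).comp (LinearMap.single ℂ W p.2)

/-- The reverse maps of the splayed representation. -/
def splφm : ∀ e', splV' V₀ W (splHd' h₀ h₂ e') →ₗ[ℂ] splV' V₀ W (splTl' t₀ t₁ e')
  | .inl e => φm (.inl e)
  | .inr (.inl p) => (φm (.inr (.inl p.1))).comp (LinearMap.single ℂ W p.2)
  | .inr (.inr p) => (LinearMap.proj p.2).comp (φm (.inr (.inr p.1)))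

/-! Edges of `Q` away from `o` reappear unchanged in `Q'`. At a new node `j` only the copies
indexed by `j` end, and they contribute `π_j φ_e φ_{e*} ι_j` (resp. `π_j φ_{e*} φ_e ι_j`). At an
old node, the `|J|` copies of an edge through `o` whose original contribution is `f ∘ g`, with `g`
landing in `V_o`, contribute together `Σ_k f ι_k π_k g = f g`, because `Σ_k ι_k π_k = id`. -/

theorem LinearMap.comp_finsetSum {R M N P ι : Type*} [Semiring R] [AddCommMonoid M] [Module R M]
    [AddCommMonoid N] [Module R N] [AddCommMonoid P] [Module R P]
    (g : N →ₗ[R] P) (s : Finset ι) (f : ι → M →ₗ[R] N) :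
    g ∘ₗ ∑ i ∈ s, f i = ∑ i ∈ s, g ∘ₗ f i := by
  ext x
  simp

theorem LinearMap.finsetSum_comp {R M N P ι : Type*} [Semiring R] [AddCommMonoid M] [Module R M]
    [AddCommMonoid N] [Module R N] [AddCommMonoid P] [Module R P]
    (s : Finset ι) (g : ι → N →ₗ[R] P) (f : M →ₗ[R] N) :
    (∑ i ∈ s, g i) ∘ₗ f = ∑ i ∈ s, g i ∘ₗ f := by
  ext x
  simp

theorem LinearMap.sum_comp_single_comp_proj_comp {R ι M N : Type*} {φ : ι → Type*} [Semiring R]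
    [Fintype ι] [DecidableEq ι] [∀ k, AddCommMonoid (φ k)] [∀ k, Module R (φ k)]
    [AddCommMonoid M] [Module R M] [AddCommMonoid N] [Module R N]
    (f : M →ₗ[R] ∀ k, φ k) (g : (∀ k, φ k) →ₗ[R] N) :
    ∑ k, (g ∘ₗ LinearMap.single R φ k) ∘ₗ LinearMap.proj k ∘ₗ f = g ∘ₗ f := by
  ext x
  simp [← map_sum, Finset.univ_sum_single]

section

variable [Fintype E₀] [Fintype E₁] [Fintype E₂] [Fintype J] [DecidableEq I₀]

theorem muQ_splφ_inr (j : J) :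
    muQ (splHd' h₀ h₂) (splTl' t₀ t₁) (splV' V₀ W)
        (splφp V₀ W h₀ t₀ t₁ h₂ φp) (splφm V₀ W h₀ t₀ t₁ h₂ φm) (.inr j) =
      LinearMap.proj j ∘ₗ muQ (splHd h₀ h₂) (splTl t₀ t₁) (splV V₀ W) φp φm (.inr ()) ∘ₗ
        LinearMap.single ℂ W j := by
  have muQ_o : muQ (splHd h₀ h₂) (splTl t₀ t₁) (splV V₀ W) φp φm (.inr ()) =
      ∑ e : E₁, φp (.inr (.inl e)) ∘ₗ φm (.inr (.inl e)) -
        ∑ e : E₂, φm (.inr (.inr e)) ∘ₗ φp (.inr (.inr e)) := by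
    simp [muQ, Fintype.sum_sum_type]
  rw [muQ_o]
  simp [muQ, Fintype.sum_sum_type, Fintype.sum_prod_type, splφp, splφm, LinearMap.comp_sub,
    LinearMap.sub_comp, LinearMap.comp_finsetSum, LinearMap.finsetSum_comp, LinearMap.comp_assoc]

theorem muQ_splφ_inl (i : I₀) :
    muQ (splHd' h₀ h₂) (splTl' t₀ t₁) (splV' V₀ W)
        (splφp V₀ W h₀ t₀ t₁ h₂ φp) (splφm V₀ W h₀ t₀ t₁ h₂ φm) (.inl i) =
      muQ (splHd h₀ h₂) (splTl t₀ t₁) (splV V₀ W) φp φm (.inl i) := by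
  simp only [muQ, Fintype.sum_sum_type, Fintype.sum_prod_type, splφp, splφm]
  congr 2
  · refine Finset.sum_congr rfl fun e _ => ?_
    by_cases h : h₀ e = i
    · subst h; simp
    · simp [h]
  · simp only [splHd, splHd', reduceCtorEq, dite_false, Finset.sum_const_zero, zero_add]
    refine Finset.sum_congr rfl fun e _ => ?_
    by_cases h : h₂ e = i
    · subst h; simpa using LinearMap.sum_comp_single_comp_proj_comp _ _
    · simp [h]
  · refine Finset.sum_congr rfl fun e _ => ?_
    by_cases h : t₀ e = i
    · subst h; simp
    · simp [h]
  · simp only [splTl, splTl', reduceCtorEq, dite_false, Finset.sum_const_zero, add_zero]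
    refine Finset.sum_congr rfl fun e _ => ?_
    by_cases h : t₁ e = i
    · subst h; simpa using LinearMap.sum_comp_single_comp_proj_comp _ _
    · simp [h]

end

theorem stmt_8 [Fintype E₀] [Fintype E₁] [Fintype E₂] [Fintype J]
    [DecidableEq I₀] :
    (∀ j : J,
      muQ (splHd' h₀ h₂) (splTl' t₀ t₁) (splV' V₀ W)
          (splφp V₀ W h₀ t₀ t₁ h₂ φp) (splφm V₀ W h₀ t₀ t₁ h₂ φm) (.inr j) =
        (LinearMap.proj j).comp
          ((muQ (splHd h₀ h₂) (splTl t₀ t₁) (splV V₀ W) φp φm (.inr ())).comp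
            (LinearMap.single ℂ W j))) ∧
    (∀ i : I₀,
      muQ (splHd' h₀ h₂) (splTl' t₀ t₁) (splV' V₀ W)
          (splφp V₀ W h₀ t₀ t₁ h₂ φp) (splφm V₀ W h₀ t₀ t₁ h₂ φm) (.inl i) =
        muQ (splHd h₀ h₂) (splTl t₀ t₁) (splV V₀ W) φp φm (.inl i)) :=
  ⟨muQ_splφ_inr V₀ W h₀ t₀ t₁ h₂ φp φm, muQ_splφ_inl V₀ W h₀ t₀ t₁ h₂ φp φm⟩

end Splay
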